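/- arXiv:math/0606760 — 4 statements merged into one kernel-verified Lean document; each statement's English description precedes it below -/
import Mathlib

section
/- For every integer n ≥ 1 and every real number η, one has (1/π) ∫_{−∞}^{∞} e^{(2+it)² − 2η(2+it)} (2+it)^{−n} dt = 2^n / (√π (n−1)!) · ∫_η^∞ (ξ−η)^{n−1} e^{−ξ²} dξ; here the left-hand side (an integral of a complex-valued function over the real line, i.e. the contour integral (1/(πi))∫_{Γ'} e^{v²−2ηv} v^{−n} dv along the vertical line Γ' given by Re v = 2 traversed upwards) is equal to the real number on the right-hand side. -/
/-!
For `Re v > 0` one has `v ^ (-(m + 1)) = (1 / m!) ∫₀^∞ s ^ m e^{-v s} ds`. Inserting this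
into the integral along `Re v = c > 0` and exchanging the integrals (the integrand is dominated
by `e^{-t²} · s ^ m e^{-c s}`), the `t`-integral becomes the Gaussian
`∫ e^{v² - (2η + s) v} dt = √π e^{-(η + s/2)²}`, independent of `c`; the substitution
`ξ = η + s / 2` then gives the right-hand side.
-/

open Real MeasureTheory Complex Set Filter
open scoped Nat Topology

section Laplace

variable {v : ℂ}

lemma integrableOn_pow_mul_cexp_neg_mul_Ioi (n : ℕ) (hv : 0 < v.re) :
    IntegrableOn (fun s : ℝ => (s : ℂ) ^ n * cexp (-(v * s))) (Ioi 0) := by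
  have hreal :
      IntegrableOn (fun s : ℝ => s ^ (n : ℝ) * Real.exp (-v.re * s ^ (1 : ℝ))) (Ioi 0) :=
    integrableOn_rpow_mul_exp_neg_mul_rpow (neg_one_lt_zero.trans_le n.cast_nonneg) one_pos hv
  refine hreal.mono' (by fun_prop) ?_
  filter_upwards [ae_restrict_mem measurableSet_Ioi] with s (hs : 0 < s)
  simp [norm_exp, abs_of_pos hs]

lemma tendsto_pow_mul_cexp_neg_mul_atTop (n : ℕ) (hv : 0 < v.re) :
    Tendsto (fun s : ℝ => (s : ℂ) ^ n * cexp (-(v * s))) atTop (𝓝 0) := by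
  rw [tendsto_zero_iff_norm_tendsto_zero]
  refine (tendsto_rpow_mul_exp_neg_mul_atTop_nhds_zero n v.re hv).congr' ?_
  filter_upwards [eventually_gt_atTop 0] with s hs
  simp [norm_exp, abs_of_pos hs]

theorem integral_pow_mul_cexp_neg_mul_Ioi (n : ℕ) (hv : 0 < v.re) :
    ∫ s in Ioi (0 : ℝ), (s : ℂ) ^ n * cexp (-(v * s)) = n ! / v ^ (n + 1) := by
  have hv0 : v ≠ 0 := by rintro rfl; simp at hv
  induction n with
  | zero => simpa [neg_mul] using integral_exp_mul_complex_Ioi (a := -v) (by simpa using hv) 0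
  | succ k ih =>
    have hderiv : ∀ s : ℝ, HasDerivAt (fun s : ℝ => (s : ℂ) ^ (k + 1) * cexp (-(v * s)))
        ((k + 1) * ((s : ℂ) ^ k * cexp (-(v * s))) - v * ((s : ℂ) ^ (k + 1) * cexp (-(v * s))))
        s := by
      intro s
      have hpow : HasDerivAt (fun s : ℝ => (s : ℂ) ^ (k + 1)) ((k + 1) * (s : ℂ) ^ k) s := by
        simpa using (hasDerivAt_pow (k + 1) s).ofReal_comp
      have hexp : HasDerivAt (fun s : ℝ => cexp (-(v * s))) (cexp (-(v * s)) * -v) s := by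
        simpa using ((hasDerivAt_id s).ofReal_comp.const_mul v).neg.cexp
      exact (hpow.mul hexp).congr_deriv (by ring)
    -- integrating the derivative of `s ^ (k + 1) * exp (-v s)` gives `(k + 1) I_k = v I_{k+1}`
    have hparts := integral_Ioi_of_hasDerivAt_of_tendsto' (fun s _ => hderiv s)
      (((integrableOn_pow_mul_cexp_neg_mul_Ioi k hv).const_mul _).sub
        ((integrableOn_pow_mul_cexp_neg_mul_Ioi (k + 1) hv).const_mul _))
      (tendsto_pow_mul_cexp_neg_mul_atTop (k + 1) hv)
    rw [integral_sub ((integrableOn_pow_mul_cexp_neg_mul_Ioi k hv).const_mul _)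
      ((integrableOn_pow_mul_cexp_neg_mul_Ioi (k + 1) hv).const_mul _), integral_const_mul,
      integral_const_mul, ih] at hparts
    rw [eq_div_iff (pow_ne_zero _ hv0)]
    simp only [ofReal_zero, zero_pow (Nat.succ_ne_zero k), zero_mul, sub_zero] at hparts
    field_simp at hparts
    push_cast [Nat.factorial_succ]
    linear_combination -hparts

end Laplace

lemma vertical_sq_sub_mul_eq_quadratic (c t : ℝ) (a : ℂ) :
    (c + t * I) ^ 2 - a * (c + t * I)
      = -1 * (t : ℂ) ^ 2 + (2 * c - a) * I * t + (c ^ 2 - a * c) := by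
  linear_combination (t : ℂ) ^ 2 * I_sq

theorem integral_cexp_sq_sub_mul_vertical (c : ℝ) (a : ℂ) :
    ∫ t : ℝ, cexp ((c + t * I) ^ 2 - a * (c + t * I)) = √π * cexp (-(a / 2) ^ 2) := by
  simp_rw [vertical_sq_sub_mul_eq_quadratic]
  rw [integral_cexp_quadratic (by simp), neg_neg, div_one, sqrt_eq_rpow, ofReal_cpow pi_pos.le]
  push_cast
  congr 2
  field_simp
  linear_combination 4 * (2 * c - a) ^ 2 * I_sq

theorem integral_pow_mul_exp_neg_sq_shift_Ioi (m : ℕ) (η : ℝ) :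
    ∫ s in Ioi (0 : ℝ), s ^ m * Real.exp (-(η + s / 2) ^ 2)
      = 2 ^ (m + 1) * ∫ ξ in Ioi η, (ξ - η) ^ m * Real.exp (-ξ ^ 2) := by
  have hshift : ∫ ξ in Ioi η, (ξ - η) ^ m * Real.exp (-ξ ^ 2)
      = ∫ x in Ioi 0, x ^ m * Real.exp (-(η + x) ^ 2) := by
    rw [← (measurePreserving_add_right volume η).setIntegral_preimage_emb
      (measurableEmbedding_addRight η), preimage_add_const_Ioi, sub_self]
    simp [add_comm]
  have hscale := integral_comp_mul_left_Ioi (fun x => x ^ m * Real.exp (-(η + x) ^ 2)) 0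
    (b := 2⁻¹) (by norm_num)
  simp only [mul_zero, inv_inv, smul_eq_mul] at hscale
  rw [hshift, pow_succ, mul_assoc, ← hscale, ← integral_const_mul]
  congr 1 with s
  rw [mul_pow, ← mul_assoc, ← mul_assoc, ← mul_pow, mul_inv_cancel₀ two_ne_zero, one_pow,
    one_mul, div_eq_inv_mul]

section VerticalLine

variable {c : ℝ}

lemma integrable_laplace_kernel_vertical (hc : 0 < c) (m : ℕ) (a : ℂ) :
    Integrable (fun p : ℝ × ℝ => (p.2 : ℂ) ^ m * cexp (-((c + p.1 * I) * p.2)) *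
        cexp ((c + p.1 * I) ^ 2 - a * (c + p.1 * I)))
      (volume.prod (volume.restrict (Ioi 0))) := by
  have hgauss : Integrable (fun t : ℝ => cexp ((c + t * I) ^ 2 - a * (c + t * I))) := by
    simp_rw [vertical_sq_sub_mul_eq_quadratic]
    exact integrable_cexp_quadratic (b := 1) (by simp) _ _
  have hlaplace : IntegrableOn (fun s : ℝ => (s : ℂ) ^ m * cexp (-(c * s))) (Ioi 0) :=
    integrableOn_pow_mul_cexp_neg_mul_Ioi m (by simpa using hc)
  refine (hgauss.norm.mul_prod hlaplace.norm).mono' (by fun_prop)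
    (.of_forall fun p => le_of_eq ?_)
  simp only [norm_mul, norm_pow, norm_real, norm_exp, norm_eq_abs, neg_re, mul_re, add_re,
    ofReal_re, I_re, mul_zero, ofReal_im, I_im, mul_one, sub_self, add_zero, add_im, mul_im,
    zero_add, sub_zero, sub_re]
  ring

theorem integral_vertical_cexp_mul_zpow_neg_succ (hc : 0 < c) (m : ℕ) (η : ℝ) :
    ∫ t : ℝ,
        cexp ((c + t * I) ^ 2 - 2 * η * (c + t * I)) * (c + t * I) ^ (-((m + 1 : ℕ) : ℤ))
      = √π / m ! * ((∫ s in Ioi (0 : ℝ), s ^ m * Real.exp (-(η + s / 2) ^ 2) : ℝ) : ℂ) := by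
  set F : ℝ → ℝ → ℂ := fun t s => (s : ℂ) ^ m * cexp (-((c + t * I) * s)) *
    cexp ((c + t * I) ^ 2 - 2 * η * (c + t * I)) with hF
  have hlaplace : ∀ t : ℝ, cexp ((c + t * I) ^ 2 - 2 * η * (c + t * I))
      * (c + t * I) ^ (-((m + 1 : ℕ) : ℤ)) = (m ! : ℂ)⁻¹ * ∫ s in Ioi 0, F t s := by
    intro t
    have hv : (c + t * I) ≠ 0 := fun h => hc.ne' (by simpa using congrArg re h)
    have hfact : (m ! : ℂ) ≠ 0 := Nat.cast_ne_zero.2 m.factorial_ne_zero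
    rw [hF, integral_mul_const, integral_pow_mul_cexp_neg_mul_Ioi m (by simpa using hc),
      zpow_neg, zpow_natCast]
    field_simp
  have hgauss :
      ∀ s : ℝ, ∫ t, F t s = √π * ((s ^ m * Real.exp (-(η + s / 2) ^ 2) : ℝ) : ℂ) := by
    intro s
    have hexp : ∀ t : ℝ, F t s = s ^ m * cexp ((c + t * I) ^ 2 - (2 * η + s) * (c + t * I)) :=
      fun t => by
        simp only [hF]
        rw [mul_assoc, ← Complex.exp_add]
        ring_nf
    simp_rw [hexp]
    rw [integral_const_mul, integral_cexp_sq_sub_mul_vertical]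
    push_cast
    ring_nf
  calc _ = (m ! : ℂ)⁻¹ * ∫ t, ∫ s in Ioi 0, F t s := by
        simp_rw [hlaplace]; exact integral_const_mul _ _
    _ = (m ! : ℂ)⁻¹ * ∫ s in Ioi 0, ∫ t, F t s := by
        rw [integral_integral_swap (integrable_laplace_kernel_vertical hc m _)]
    _ = _ := by
        simp_rw [hgauss]
        rw [integral_const_mul, integral_complex_ofReal]
        ring

end VerticalLine

/-- For `n ≥ 1` and real `η`,
`(1/π) ∫_ℝ e^{(2+it)² - 2η(2+it)} (2+it)^{-n} dt
  = 2^n/(√π (n-1)!) ∫_η^∞ (ξ-η)^{n-1} e^{-ξ²} dξ`,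
i.e. the contour integral `(1/(πi)) ∫_{Re v = 2} e^{v²-2ηv} v^{-n} dv` equals the real
number on the right. -/
theorem stmt1 (n : ℕ) (hn : 1 ≤ n) (η : ℝ) :
    (1 / (Real.pi : ℂ)) *
        ∫ t : ℝ,
          Complex.exp ((2 + t * Complex.I) ^ 2 - 2 * (η : ℂ) * (2 + t * Complex.I)) *
            (2 + t * Complex.I) ^ (-(n : ℤ)) =
      ((2 ^ n / (Real.sqrt Real.pi * (n - 1).factorial) *
          ∫ ξ in Set.Ioi η, (ξ - η) ^ (n - 1) * Real.exp (-ξ ^ 2) : ℝ) : ℂ) := by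
  obtain ⟨m, rfl⟩ := Nat.exists_eq_add_of_le' hn
  have hline := integral_vertical_cexp_mul_zpow_neg_succ two_pos m η
  simp only [ofReal_ofNat] at hline
  rw [hline, integral_pow_mul_exp_neg_sq_shift_Ioi, Nat.add_sub_cancel]
  have hsqrt : (√π : ℂ) ^ 2 = π := by norm_cast; exact sq_sqrt pi_pos.le
  have hsqrt0 : (√π : ℂ) ≠ 0 := ofReal_ne_zero.2 (sqrt_pos.2 pi_pos).ne'
  push_cast
  field_simp
  rw [hsqrt]
end

section
/- For all integers n ≥ k ≥ 1 and every real number y, ∫_y^∞ (x−y)^{k−1} H_n(x) e^{−x²} dx = (k−1)! · e^{−y²} · H_{n−k}(y). -/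
open Real MeasureTheory

/-- Physicists' Hermite polynomials: `H 0 = 1`, `H 1 x = 2x`,
`H (n+2) x = 2x * H (n+1) x - 2(n+1) * H n x`. -/
noncomputable def hermiteH : ℕ → ℝ → ℝ
  | 0 => fun _ => 1
  | 1 => fun x => 2 * x
  | (n + 2) => fun x => 2 * x * hermiteH (n + 1) x - 2 * (n + 1) * hermiteH n x

/-!
Since `H_n' = 2n H_{n-1}`, the recurrence gives `(H_n e^{-x²})' = -H_{n+1} e^{-x²}`. Integrating
`(x-y)^j H_{m+j+1}(x) e^{-x²}` by parts on `(y, ∞)` thus lowers both `j` and the Hermite index by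
one at the cost of a factor `j`; the boundary terms vanish at `y` because of `(x-y)^j`, and at
infinity because a polynomial times a Gaussian is integrable together with its derivative. After
`j` steps one is left with `∫_y^∞ H_{m+1} e^{-x²} = H_m(y) e^{-y²}`.
-/

open Filter Topology Polynomial Set

theorem hermiteH_succ (n : ℕ) (x : ℝ) :
    hermiteH (n + 1) x = 2 * x * hermiteH n x - 2 * n * hermiteH (n - 1) x := by
  cases n <;> simp [hermiteH]

theorem hermiteH_eq_eval : ∀ n : ℕ, ∃ p : ℝ[X], ∀ x, hermiteH n x = p.eval x
  | 0 => ⟨1, by simp [hermiteH]⟩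
  | 1 => ⟨C 2 * X, by simp [hermiteH]⟩
  | n + 2 => by
    obtain ⟨p, hp⟩ := hermiteH_eq_eval (n + 1)
    obtain ⟨q, hq⟩ := hermiteH_eq_eval n
    exact ⟨C 2 * X * p - C (2 * (n + 1 : ℝ)) * q, fun x => by simp [hermiteH, hp, hq]⟩

theorem hasDerivAt_hermiteH : ∀ (n : ℕ) (x : ℝ),
    HasDerivAt (hermiteH n) (2 * n * hermiteH (n - 1) x) x
  | 0, x => (hasDerivAt_const x (1 : ℝ)).congr_deriv (by simp)
  | 1, x => ((hasDerivAt_id x).const_mul (2 : ℝ)).congr_deriv (by simp [hermiteH])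
  | n + 2, x =>
    ((((hasDerivAt_id x).const_mul (2 : ℝ)).mul (hasDerivAt_hermiteH (n + 1) x)).sub
      ((hasDerivAt_hermiteH n x).const_mul (2 * (n + 1) : ℝ))).congr_deriv <| by
        simp only [Nat.add_sub_cancel, id]
        push_cast
        linear_combination (-2 * (n + 1) : ℝ) * hermiteH_succ n x

theorem hasDerivAt_hermiteH_mul_exp (n : ℕ) (x : ℝ) :
    HasDerivAt (fun x => hermiteH n x * exp (-x ^ 2)) (-(hermiteH (n + 1) x * exp (-x ^ 2))) x :=
  ((hasDerivAt_hermiteH n x).mul (hasDerivAt_pow 2 x).neg.exp).congr_deriv <| by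
    rw [hermiteH_succ]
    simp only [Pi.neg_apply]
    push_cast
    ring

theorem integrable_eval_mul_exp_neg_sq (p : ℝ[X]) :
    Integrable fun x => p.eval x * exp (-x ^ 2) := by
  induction p using Polynomial.induction_on' with
  | add p q hp hq => exact (hp.add hq).congr (ae_of_all _ fun x => by simp [add_mul])
  | monomial n a =>
    have h := integrable_rpow_mul_exp_neg_mul_sq one_pos (s := n)
      (by linarith [n.cast_nonneg (α := ℝ)])
    exact (h.const_mul a).congr (ae_of_all _ fun x => by simp [rpow_natCast, mul_assoc])

theorem tendsto_eval_mul_exp_neg_sq_atTop (p : ℝ[X]) :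
    Tendsto (fun x => p.eval x * exp (-x ^ 2)) atTop (𝓝 0) := by
  have hderiv : ∀ x, HasDerivAt (fun x => p.eval x * exp (-x ^ 2))
      ((derivative p - C 2 * X * p).eval x * exp (-x ^ 2)) x := fun x =>
    ((p.hasDerivAt x).mul (hasDerivAt_pow 2 x).neg.exp).congr_deriv <| by
      simp only [Pi.neg_apply, eval_sub, eval_mul, eval_C, eval_X]
      push_cast
      ring
  exact tendsto_zero_of_hasDerivAt_of_integrableOn_Ioi (a := 0) (fun x _ => hderiv x)
    (integrable_eval_mul_exp_neg_sq _).integrableOn (integrable_eval_mul_exp_neg_sq p).integrableOn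

theorem integrable_pow_sub_mul_hermiteH_mul_exp (j n : ℕ) (y : ℝ) :
    Integrable fun x => (x - y) ^ j * (hermiteH n x * exp (-x ^ 2)) := by
  obtain ⟨p, hp⟩ := hermiteH_eq_eval n
  exact (integrable_eval_mul_exp_neg_sq ((X - C y) ^ j * p)).congr
    (ae_of_all _ fun x => by simp [hp, mul_assoc])

theorem tendsto_pow_sub_mul_hermiteH_mul_exp_atTop (j n : ℕ) (y : ℝ) :
    Tendsto (fun x => (x - y) ^ j * (hermiteH n x * exp (-x ^ 2))) atTop (𝓝 0) := by
  obtain ⟨p, hp⟩ := hermiteH_eq_eval n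
  exact (tendsto_eval_mul_exp_neg_sq_atTop ((X - C y) ^ j * p)).congr fun x => by
    simp [hp, mul_assoc]

theorem integral_Ioi_hermiteH_mul_exp (m : ℕ) (y : ℝ) :
    ∫ x in Ioi y, hermiteH (m + 1) x * exp (-x ^ 2) = hermiteH m y * exp (-y ^ 2) := by
  have h := integral_Ioi_of_hasDerivAt_of_tendsto' (a := y)
    (fun x _ => hasDerivAt_hermiteH_mul_exp m x)
    ((integrable_pow_sub_mul_hermiteH_mul_exp 0 (m + 1) y).neg.congr
      (ae_of_all _ fun x => by simp)).integrableOn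
    ((tendsto_pow_sub_mul_hermiteH_mul_exp_atTop 0 m y).congr fun x => by simp)
  rw [integral_neg] at h
  linarith

theorem integral_Ioi_pow_succ_sub_mul_hermiteH_mul_exp (j n : ℕ) (y : ℝ) :
    ∫ x in Ioi y, (x - y) ^ (j + 1) * (hermiteH (n + 1) x * exp (-x ^ 2)) =
      (j + 1) * ∫ x in Ioi y, (x - y) ^ j * (hermiteH n x * exp (-x ^ 2)) := by
  have hu : ∀ x, HasDerivAt (fun x => (x - y) ^ (j + 1)) ((j + 1) * (x - y) ^ j) x := fun x =>
    (((hasDerivAt_id x).sub_const y).pow (j + 1)).congr_deriv (by simp)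
  have h_zero : Tendsto (fun x => (x - y) ^ (j + 1) * (hermiteH n x * exp (-x ^ 2)))
      (𝓝[>] y) (𝓝 0) := by
    have hcont : Continuous fun x => (x - y) ^ (j + 1) * (hermiteH n x * exp (-x ^ 2)) :=
      continuous_iff_continuousAt.2 fun x =>
        ((hu x).mul (hasDerivAt_hermiteH_mul_exp n x)).continuousAt
    exact (hcont.tendsto' y 0 (by simp)).mono_left nhdsWithin_le_nhds
  have h := integral_Ioi_mul_deriv_eq_deriv_mul (fun x _ => hu x)
    (fun x _ => hasDerivAt_hermiteH_mul_exp n x)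
    ((integrable_pow_sub_mul_hermiteH_mul_exp (j + 1) (n + 1) y).neg.congr
      (ae_of_all _ fun x => by simp)).integrableOn
    (((integrable_pow_sub_mul_hermiteH_mul_exp j n y).const_mul (j + 1 : ℝ)).congr
      (ae_of_all _ fun x => by simp [mul_assoc])).integrableOn
    h_zero (tendsto_pow_sub_mul_hermiteH_mul_exp_atTop (j + 1) n y)
  simp only [mul_neg, integral_neg, mul_assoc, integral_const_mul] at h
  linarith

theorem integral_Ioi_pow_sub_mul_hermiteH_mul_exp (j m : ℕ) (y : ℝ) :
    ∫ x in Ioi y, (x - y) ^ j * (hermiteH (m + j + 1) x * exp (-x ^ 2)) =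
      j.factorial * (hermiteH m y * exp (-y ^ 2)) := by
  induction j with
  | zero => simpa using integral_Ioi_hermiteH_mul_exp m y
  | succ j ih =>
    rw [← add_assoc, integral_Ioi_pow_succ_sub_mul_hermiteH_mul_exp, ih, Nat.factorial_succ]
    push_cast
    ring

/-- For `n ≥ k ≥ 1` and real `y`,
`∫_y^∞ (x-y)^{k-1} H_n(x) e^{-x²} dx = (k-1)! e^{-y²} H_{n-k}(y)`. -/
theorem stmt2 (n k : ℕ) (hk : 1 ≤ k) (hkn : k ≤ n) (y : ℝ) :
    ∫ x in Set.Ioi y, (x - y) ^ (k - 1) * hermiteH n x * Real.exp (-x ^ 2) =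
      (k - 1).factorial * Real.exp (-y ^ 2) * hermiteH (n - k) y := by
  obtain ⟨j, rfl⟩ : ∃ j, k = j + 1 := ⟨k - 1, by omega⟩
  obtain ⟨m, rfl⟩ : ∃ m, n = m + j + 1 := ⟨n - (j + 1), by omega⟩
  have h := integral_Ioi_pow_sub_mul_hermiteH_mul_exp j m y
  simp only [← mul_assoc] at h
  rw [show m + j + 1 - (j + 1) = m by omega, Nat.add_sub_cancel, h]
  ring
end

section
/- Let 0 < q < 1 be real and set a = q²/(1−q²). For an integer N ≥ 1 define E_N = q/(a√(N/2)), r₁(N) = 1/q − 2/(a√(N/2)), and w_N(t) = r₁(N)·e^{i t E_N} for real t the parametrization of the circle of radius r₁(N) about the origin; let F(z) = ln|z−q| − (1−q²)^{−1} ln|z| (the real part of f(z) = log(z−q) − (1−q²)^{−1} log z). Then there exist a constant C > 0 (depending only on q) and an integer N₀ such that for all N ≥ N₀ and all real t with |t| ≤ π/E_N, N·( F(w_N(0)) − F(w_N(t)) ) ≤ −C t². -/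
/-!
On the circle `|z| = r` the `log |z|` part of `F` is constant, and
`|r e^{iθ} - q|² = (r - q)² + 2rq(1 - cos θ)`, so `N (F(w_N(0)) - F(w_N(t))) = -(N/2) log (1 + u)`
with `u = 2rq(1 - cos θ)/(r - q)²` and `θ = t E_N`. For large `N`, `r - q` stays between `b/2` and
`b = (1 - q²)/q`, so `u` is bounded and `log (1 + u) ≥ u/(1 + 16/b²)`, while Jordan's inequality
`1 - cos θ ≥ 2θ²/π²` on `|θ| ≤ π` gives `u ≳ θ²`. Since `N E_N² = 2b²` does not depend on `N`,
this yields `-C t²`.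
-/

open Real Complex

lemma norm_ofReal_mul_exp_sub_ofReal_sq (r q θ : ℝ) :
    ‖(r : ℂ) * exp (θ * I) - q‖ ^ 2 = (r - q) ^ 2 + 2 * r * q * (1 - Real.cos θ) := by
  rw [Complex.sq_norm, Complex.normSq_apply]
  simp only [sub_re, mul_re, ofReal_re, exp_ofReal_mul_I_re, ofReal_im, exp_ofReal_mul_I_im,
    zero_mul, sub_zero, sub_im, mul_im, add_zero]
  linear_combination r ^ 2 * Real.sin_sq_add_cos_sq θ

lemma log_norm_ofReal_mul_exp_sub_ofReal {r q : ℝ} (hq : 0 ≤ q) (hqr : q < r) (θ : ℝ) :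
    Real.log ‖(r : ℂ) * exp (θ * I) - q‖ =
      Real.log (r - q) + Real.log (1 + 2 * r * q * (1 - Real.cos θ) / (r - q) ^ 2) / 2 := by
  have hrq : 0 < r - q := sub_pos.2 hqr
  have hsplit : (r - q) ^ 2 + 2 * r * q * (1 - Real.cos θ) =
      (r - q) ^ 2 * (1 + 2 * r * q * (1 - Real.cos θ) / (r - q) ^ 2) := by
    field_simp
  have hu : 0 ≤ 2 * r * q * (1 - Real.cos θ) / (r - q) ^ 2 := by
    have hcos : 0 ≤ 1 - Real.cos θ := sub_nonneg.2 (Real.cos_le_one θ)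
    have hr : 0 ≤ r := by linarith
    positivity
  rw [← Real.sqrt_sq (norm_nonneg _), norm_ofReal_mul_exp_sub_ofReal_sq, hsplit,
    Real.log_sqrt (by positivity), Real.log_mul (by positivity) (by positivity), Real.log_pow]
  push_cast
  ring

lemma div_one_add_le_log_one_add {u K : ℝ} (hu : 0 ≤ u) (huK : u ≤ K) :
    u / (1 + K) ≤ Real.log (1 + u) :=
  calc u / (1 + K) ≤ u / (1 + u) := by gcongr
    _ = 1 - (1 + u)⁻¹ := by field_simp; ring
    _ ≤ Real.log (1 + u) := Real.one_sub_inv_le_log_of_pos (by positivity)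

lemma sq_mul_div_le_log_one_add_mul_one_sub_cos {q b r θ : ℝ} (hq : 0 < q) (hb : 0 < b)
    (hbr : b / 2 ≤ r - q) (hrb : r - q ≤ b) (hrq : r * q ≤ 1) (hθ : |θ| ≤ π) :
    4 * q ^ 2 * θ ^ 2 / (π ^ 2 * b ^ 2 * (1 + 16 / b ^ 2)) ≤
      Real.log (1 + 2 * r * q * (1 - Real.cos θ) / (r - q) ^ 2) := by
  have hqr : q ≤ r := by linarith
  have hrq0 : 0 < r - q := by linarith
  have hcos_lower : 2 / π ^ 2 * θ ^ 2 ≤ 1 - Real.cos θ := by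
    linarith [Real.cos_le_one_sub_mul_cos_sq hθ]
  have hcos_upper : 1 - Real.cos θ ≤ 2 := by linarith [Real.neg_one_le_cos θ]
  have hcos0 : 0 ≤ 1 - Real.cos θ := sub_nonneg.2 (Real.cos_le_one θ)
  have hr : 0 ≤ r := by linarith
  set u := 2 * r * q * (1 - Real.cos θ) / (r - q) ^ 2 with hu
  have hu0 : 0 ≤ u := by positivity
  have huK : u ≤ 16 / b ^ 2 := by
    rw [hu, div_le_div_iff₀ (by positivity) (by positivity)]
    nlinarith [mul_le_mul hrq hcos_upper hcos0 zero_le_one]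
  have hu_ge : 4 * q ^ 2 * θ ^ 2 / (π ^ 2 * b ^ 2) ≤ u := by
    rw [hu, div_le_div_iff₀ (by positivity) (by positivity)]
    have hπθ : 2 * θ ^ 2 ≤ π ^ 2 * (1 - Real.cos θ) := by
      rw [div_mul_eq_mul_div, div_le_iff₀ (by positivity)] at hcos_lower
      linarith
    calc 4 * q ^ 2 * θ ^ 2 * (r - q) ^ 2 ≤ 2 * q * q * (2 * θ ^ 2) * b ^ 2 := by
          have : (r - q) ^ 2 ≤ b ^ 2 := by gcongr
          nlinarith [sq_nonneg (q * θ)]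
      _ ≤ 2 * r * q * (π ^ 2 * (1 - Real.cos θ)) * b ^ 2 := by gcongr
      _ = 2 * r * q * (1 - Real.cos θ) * (π ^ 2 * b ^ 2) := by ring
  calc 4 * q ^ 2 * θ ^ 2 / (π ^ 2 * b ^ 2 * (1 + 16 / b ^ 2))
      = 4 * q ^ 2 * θ ^ 2 / (π ^ 2 * b ^ 2) / (1 + 16 / b ^ 2) := by rw [div_div]
    _ ≤ u / (1 + 16 / b ^ 2) := by gcongr
    _ ≤ Real.log (1 + u) := div_one_add_le_log_one_add hu0 huK

-- With `b = (1 - q²)/q` and `δ = 2/(qS) ≤ 1/2`, the radius is `r = q + b (1 - δ)`.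
lemma radius_sub_bounds {q S : ℝ} (hq0 : 0 < q) (hq1 : q < 1) (hS : 4 / q ≤ S) :
    (1 - q ^ 2) / q / 2 ≤ 1 / q - 2 / (q ^ 2 / (1 - q ^ 2) * S) - q ∧
      1 / q - 2 / (q ^ 2 / (1 - q ^ 2) * S) - q ≤ (1 - q ^ 2) / q ∧
      (1 / q - 2 / (q ^ 2 / (1 - q ^ 2) * S)) * q ≤ 1 := by
  have h1q : 0 < 1 - q ^ 2 := by nlinarith
  have hqS : 4 ≤ q * S := by rwa [div_le_iff₀' hq0] at hS
  have hS0 : 0 < S := by nlinarith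
  set b := (1 - q ^ 2) / q with hb
  set δ := 2 / (q * S) with hδ
  have hr : 1 / q - 2 / (q ^ 2 / (1 - q ^ 2) * S) = q + b * (1 - δ) := by
    rw [hb, hδ]; field_simp; ring
  have hbq : b * q = 1 - q ^ 2 := by rw [hb]; field_simp
  have hδ0 : 0 ≤ δ := by positivity
  have hδ1 : δ ≤ 1 / 2 := by rw [hδ, div_le_div_iff₀ (by positivity) two_pos]; linarith
  have hb0 : 0 < b := by positivity
  rw [hr]
  refine ⟨by nlinarith, by nlinarith, by nlinarith⟩

lemma neg_mul_log_one_add_polar_le {q b r E N t : ℝ} (hq : 0 < q) (hb : 0 < b)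
    (hbr : b / 2 ≤ r - q) (hrb : r - q ≤ b) (hrq : r * q ≤ 1) (hE : 0 < E) (ht : |t| ≤ π / E)
    (hNE : N * E ^ 2 = 2 * b ^ 2) :
    -(N * Real.log (1 + 2 * r * q * (1 - Real.cos (t * E)) / (r - q) ^ 2)) / 2 ≤
      -(4 * q ^ 2 / (π ^ 2 * (1 + 16 / b ^ 2))) * t ^ 2 := by
  have hN : 0 < N := by
    have : 0 < N * E ^ 2 := by rw [hNE]; positivity
    exact (pos_iff_pos_of_mul_pos this).2 (by positivity)
  have hθ : |t * E| ≤ π := by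
    rw [abs_mul, abs_of_pos hE]
    calc |t| * E ≤ π / E * E := by gcongr
      _ = π := by field_simp
  calc _ ≤ -(N * (4 * q ^ 2 * (t * E) ^ 2 / (π ^ 2 * b ^ 2 * (1 + 16 / b ^ 2)))) / 2 := by
        gcongr; exact sq_mul_div_le_log_one_add_mul_one_sub_cos hq hb hbr hrb hrq hθ
    _ = -(4 * q ^ 2 / (π ^ 2 * (1 + 16 / b ^ 2))) * t ^ 2 := by
      rw [mul_div_assoc', mul_left_comm,
        show N * (t * E) ^ 2 = 2 * b ^ 2 * t ^ 2 by linear_combination t ^ 2 * hNE]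
      field_simp

/-- Let `0 < q < 1`, `a = q²/(1-q²)`, `E_N = q/(a√(N/2))`, `r₁(N) = 1/q - 2/(a√(N/2))`,
`w_N(t) = r₁(N) e^{itE_N}`, and `F(z) = ln|z-q| - (1-q²)⁻¹ ln|z|`. Then there are
`C > 0` and `N₀` such that for all `N ≥ N₀` and `|t| ≤ π/E_N`,
`N (F(w_N(0)) - F(w_N(t))) ≤ -C t²`. -/
theorem stmt16 (q : ℝ) (hq0 : 0 < q) (hq1 : q < 1) :
    ∃ C > (0 : ℝ), ∃ N₀ : ℕ, ∀ N : ℕ, N₀ ≤ N → ∀ t : ℝ,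
      |t| ≤ Real.pi / (q / ((q ^ 2 / (1 - q ^ 2)) * Real.sqrt ((N : ℝ) / 2))) →
      (N : ℝ) *
          ((fun z : ℂ => Real.log (‖z - (q : ℂ)‖) -
              (1 - q ^ 2)⁻¹ * Real.log (‖z‖))
              (((1 / q - 2 / ((q ^ 2 / (1 - q ^ 2)) * Real.sqrt ((N : ℝ) / 2))) : ℝ) *
                Complex.exp ((0 : ℝ) * (q / ((q ^ 2 / (1 - q ^ 2)) *
                  Real.sqrt ((N : ℝ) / 2))) * Complex.I)) -
            (fun z : ℂ => Real.log (‖z - (q : ℂ)‖) -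
              (1 - q ^ 2)⁻¹ * Real.log (‖z‖))
              (((1 / q - 2 / ((q ^ 2 / (1 - q ^ 2)) * Real.sqrt ((N : ℝ) / 2))) : ℝ) *
                Complex.exp ((t : ℝ) * (q / ((q ^ 2 / (1 - q ^ 2)) *
                  Real.sqrt ((N : ℝ) / 2))) * Complex.I))) ≤
        -C * t ^ 2 := by
  have h1q : 0 < 1 - q ^ 2 := by nlinarith
  set b := (1 - q ^ 2) / q with hb
  have hb0 : 0 < b := by positivity
  refine ⟨4 * q ^ 2 / (π ^ 2 * (1 + 16 / b ^ 2)), by positivity, ⌈32 / q ^ 2⌉₊,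
    fun N hN t ht => ?_⟩
  have hN : 32 / q ^ 2 ≤ N := (Nat.le_ceil _).trans (by exact_mod_cast hN)
  set S := √((N : ℝ) / 2)
  have hS2 : S ^ 2 = N / 2 := Real.sq_sqrt (by positivity)
  have hqS : 4 / q ≤ S := by
    rw [← Real.sqrt_sq (by positivity : 0 ≤ 4 / q)]
    apply Real.sqrt_le_sqrt
    linarith [show (4 / q) ^ 2 = 32 / q ^ 2 / 2 by ring]
  have hN0 : (0 : ℝ) < N := lt_of_lt_of_le (by positivity) hN
  have hS0 : 0 < S := Real.sqrt_pos.2 (by positivity)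
  obtain ⟨hbr, hrb, hrq⟩ := radius_sub_bounds hq0 hq1 hqS
  set r := 1 / q - 2 / (q ^ 2 / (1 - q ^ 2) * S)
  set E := q / (q ^ 2 / (1 - q ^ 2) * S) with hE
  have hEb : E = b / S := by rw [hE, hb]; field_simp
  have hcast : ∀ x : ℝ, (x : ℂ) * ((q : ℂ) / ((q : ℂ) ^ 2 / (1 - (q : ℂ) ^ 2) * (S : ℂ))) =
      ((x * E : ℝ) : ℂ) := by
    intro x; rw [hE]; push_cast; ring
  simp only [hcast, log_norm_ofReal_mul_exp_sub_ofReal hq0.le (by linarith : q < r), norm_mul,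
    norm_exp_ofReal_mul_I, mul_one, zero_mul, Real.cos_zero, sub_self, mul_zero, zero_div,
    add_zero, Real.log_one]
  have hNE : (N : ℝ) * E ^ 2 = 2 * b ^ 2 := by rw [hEb, div_pow, hS2]; field_simp
  convert neg_mul_log_one_add_polar_le hq0 hb0 hbr hrb hrq (by rw [hEb]; positivity)
    ht hNE using 1
  ring
end

section
/- For an integer N ≥ 1 define E_N = 1/√(N/2), r₁(N) = 2 − 2/√(N/8), and w_N(t) = −1 + r₁(N)·e^{i t E_N} for real t; let F(z) = (1/2)·ln|z| − ln|1+z| (the real part of f(z) = (1/2)log z − log(1+z)). Then there exist an absolute constant C > 0 and an integer N₀ such that for all N ≥ N₀ and all real t with |t| ≤ π/E_N, N·( F(w_N(0)) − F(w_N(t)) ) ≤ −C t². -/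
open Real Complex

/-!
Write `w(θ) = -1 + r e^{iθ}`. Since `|1 + w(θ)| = r` does not depend on `θ`, only the term
`(1/2) ln |w(θ)|` moves, and `|w(θ)|² = (r - 1)² + 2r(1 - cos θ)`. Jordan's bound
`1 - cos θ ≥ 2θ²/π²` on `|θ| ≤ π` together with `ln x - ln y ≥ (x - y)/x` gives
`ln |w(θ)|² - ln |w(0)|² ≥ 8θ²/(9π²)` uniformly for `1 < r ≤ 2`. With `θ = t E_N` we have
`N θ² = 2t²`, which produces the constant `C = 4/(9π²)`.
-/

lemma norm_neg_one_add_mul_exp_sq (r θ : ℝ) :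
    ‖-1 + (r : ℂ) * exp (θ * I)‖ ^ 2 = 1 - 2 * r * Real.cos θ + r ^ 2 := by
  rw [Complex.sq_norm, Complex.normSq_apply]
  simp only [add_re, neg_re, one_re, re_ofReal_mul, Complex.exp_ofReal_mul_I_re, add_im, neg_im,
    one_im, im_ofReal_mul, Complex.exp_ofReal_mul_I_im]
  nlinarith [Real.sin_sq_add_cos_sq θ]

lemma norm_one_add_neg_one_add_mul_exp (r θ : ℝ) :
    ‖1 + (-1 + (r : ℂ) * exp (θ * I))‖ = |r| := by
  rw [add_neg_cancel_left, norm_mul, norm_exp_ofReal_mul_I, norm_real, Real.norm_eq_abs, mul_one]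

lemma half_log_norm_sub_log_norm_one_add (r θ : ℝ) :
    (1 / 2) * Real.log ‖-1 + (r : ℂ) * exp (θ * I)‖ - Real.log ‖1 + (-1 + (r : ℂ) * exp (θ * I))‖
      = Real.log (1 - 2 * r * Real.cos θ + r ^ 2) / 4 - Real.log |r| := by
  rw [norm_one_add_neg_one_add_mul_exp, ← norm_neg_one_add_mul_exp_sq, Real.log_pow]
  push_cast
  ring

lemma sub_div_le_log_sub_log {x y : ℝ} (hx : 0 < x) (hy : 0 < y) :
    (x - y) / x ≤ Real.log x - Real.log y := by
  have h := Real.log_le_sub_one_of_pos (div_pos hy hx)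
  rw [Real.log_div hy.ne' hx.ne'] at h
  rw [sub_div, div_self hx.ne']
  linarith

lemma mul_sq_le_log_sub_log {r θ : ℝ} (hr₁ : 1 < r) (hr₂ : r ≤ 2) (hθ : |θ| ≤ π) :
    8 * θ ^ 2 / (9 * π ^ 2) ≤ Real.log (1 - 2 * r * Real.cos θ + r ^ 2) - Real.log ((r - 1) ^ 2) := by
  have hπ : 0 < π ^ 2 := by positivity
  have hjordan : 2 / π ^ 2 * θ ^ 2 ≤ 1 - Real.cos θ := by
    linarith [cos_le_one_sub_mul_cos_sq hθ]
  have h2 : 2 * θ ^ 2 ≤ π ^ 2 * (1 - Real.cos θ) := by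
    rwa [div_mul_eq_mul_div, div_le_iff₀' hπ] at hjordan
  have hcos : 0 ≤ 1 - Real.cos θ := by linarith [cos_le_one θ]
  have hA : 1 - 2 * r * Real.cos θ + r ^ 2 = (r - 1) ^ 2 + 2 * r * (1 - Real.cos θ) := by ring
  have hB_pos : 0 < (r - 1) ^ 2 := by nlinarith
  have hA_pos : 0 < 1 - 2 * r * Real.cos θ + r ^ 2 := by nlinarith
  -- `(1 + r)² ≤ 9r/2` is `(2r - 1)(r - 2) ≤ 0`, the source of the constraint `r ≤ 2`.
  have hA_le : 1 - 2 * r * Real.cos θ + r ^ 2 ≤ 9 * r / 2 := by nlinarith [neg_one_le_cos θ]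
  refine le_trans ?_ (sub_div_le_log_sub_log hA_pos hB_pos)
  rw [hA, add_sub_cancel_left, ← hA, div_le_div_iff₀ (by positivity) hA_pos]
  nlinarith [mul_le_mul_of_nonneg_right h2 hA_pos.le,
    mul_le_mul_of_nonneg_left hA_le (mul_nonneg hπ.le hcos)]

lemma half_log_norm_sub_log_norm_one_add_sub_le {r θ : ℝ} (hr₁ : 1 < r) (hr₂ : r ≤ 2)
    (hθ : |θ| ≤ π) :
    ((1 / 2) * Real.log ‖-1 + (r : ℂ) * exp ((0 : ℝ) * I)‖
        - Real.log ‖1 + (-1 + (r : ℂ) * exp ((0 : ℝ) * I))‖)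
      - ((1 / 2) * Real.log ‖-1 + (r : ℂ) * exp (θ * I)‖
        - Real.log ‖1 + (-1 + (r : ℂ) * exp (θ * I))‖)
      ≤ -(2 * θ ^ 2 / (9 * π ^ 2)) := by
  rw [half_log_norm_sub_log_norm_one_add, half_log_norm_sub_log_norm_one_add, Real.cos_zero,
    show 1 - 2 * r * 1 + r ^ 2 = (r - 1) ^ 2 by ring]
  linarith [mul_sq_le_log_sub_log hr₁ hr₂ hθ,
    show 8 * θ ^ 2 / (9 * π ^ 2) = 4 * (2 * θ ^ 2 / (9 * π ^ 2)) by ring]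

lemma one_lt_two_sub_two_div_sqrt {x : ℝ} (hx : 32 < x) : 1 < 2 - 2 / √(x / 8) := by
  have h : 2 < √(x / 8) := by
    rw [Real.lt_sqrt (by norm_num)]
    linarith
  linarith [(div_lt_one (by linarith : (0 : ℝ) < √(x / 8))).2 h]

/-- With `E_N = 1/√(N/2)`, `r₁(N) = 2 - 2/√(N/8)`, `w_N(t) = -1 + r₁(N) e^{itE_N}`, and
`F(z) = (1/2) ln|z| - ln|1+z|`, there are an absolute constant `C > 0` and `N₀` such
that for all `N ≥ N₀` and `|t| ≤ π/E_N`, `N (F(w_N(0)) - F(w_N(t))) ≤ -C t²`. -/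
theorem stmt17 :
    ∃ C > (0 : ℝ), ∃ N₀ : ℕ, ∀ N : ℕ, N₀ ≤ N → ∀ t : ℝ,
      |t| ≤ Real.pi / (1 / Real.sqrt ((N : ℝ) / 2)) →
      (N : ℝ) *
          ((fun z : ℂ => (1 / 2) * Real.log ‖z‖ -
              Real.log ‖1 + z‖)
              (-1 + ((2 - 2 / Real.sqrt ((N : ℝ) / 8)) : ℝ) *
                Complex.exp ((0 : ℝ) * (1 / Real.sqrt ((N : ℝ) / 2)) * Complex.I)) -
            (fun z : ℂ => (1 / 2) * Real.log ‖z‖ -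
              Real.log ‖1 + z‖)
              (-1 + ((2 - 2 / Real.sqrt ((N : ℝ) / 8)) : ℝ) *
                Complex.exp ((t : ℝ) * (1 / Real.sqrt ((N : ℝ) / 2)) * Complex.I))) ≤
        -C * t ^ 2 := by
  refine ⟨4 / (9 * π ^ 2), by positivity, 33, fun N hN t ht => ?_⟩
  have hN' : (32 : ℝ) < N := by exact_mod_cast hN
  set s := √((N : ℝ) / 2) with hs
  have hs_pos : 0 < s := Real.sqrt_pos.2 (by linarith)
  have hθ : |t / s| ≤ π := by
    rw [abs_div, abs_of_pos hs_pos, div_le_iff₀ hs_pos]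
    rwa [div_div_eq_mul_div, div_one] at ht
  have hθ_sq : (t / s) ^ 2 = 2 * t ^ 2 / N := by
    rw [div_pow, hs, Real.sq_sqrt (by linarith)]
    field_simp
  have hexp : ∀ x : ℝ, (x : ℂ) * (1 / (s : ℂ)) * I = ((x / s : ℝ) : ℂ) * I := fun x => by
    push_cast; ring
  have key := half_log_norm_sub_log_norm_one_add_sub_le
    (one_lt_two_sub_two_div_sqrt hN') (sub_le_self _ (by positivity)) hθ
  rw [hθ_sq] at key
  simp only [hexp, zero_div]
  calc _ ≤ (N : ℝ) * -(2 * (2 * t ^ 2 / N) / (9 * π ^ 2)) :=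
        mul_le_mul_of_nonneg_left key (by linarith)
    _ = -(4 / (9 * π ^ 2)) * t ^ 2 := by
        field_simp
        ring
end
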